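/- Let h = (1,2) and v = (1,2) be permutations of {1,2} arising from the square torus representative (top row 0,1; bottom row 1,0); combining a 1,1-square-tiled surface (h₁,v₁) on n letters (single cycles with v₁⁻¹(1)=2) with the torus by cylinder concatenation yields a pair (h,v) of single (n+1)-cycles whose commutator has the same nontrivial cycle type as [h₁,v₁], together with one additional fixed point (a marked point of order 0). -/

import Mathlib

/-!
Inserting a point `y` fixed by a cycle `g` next to a point `x` of its support, as `g * swap x y`
or `swap x y * g`, gives a cycle on `insert y g.support`. Both `h` and `v` arise from `h₁`, `v₁`
by two such insertions, so they are cycles on `A ∪ {b₁, b₂}`. Since `t = (b₁ b₂)` commutes with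
`h₁` and `v₁`, and `s = (a₁ b₁)` commutes with `v₁ h₁` (which fixes `a₁` by the normalization
`v₁⁻¹ a₁ = h₁ a₁`), the commutator `⁅s h₁ t, v₁ t s⁆` equals `s ⁅h₁, v₁⁆ s⁻¹`: it has the cycle
type of `⁅h₁, v₁⁆` and fixes `b₂`.
-/

open Equiv Equiv.Perm
open scoped commutatorElement

theorem commutatorElement_concat_eq_conj {G : Type*} [Group G] {p q s t : G}
    (hs : s * s = 1) (ht : t * t = 1) (htp : Commute t p) (htq : Commute t q)
    (hsqp : Commute s (q * p)) :
    ⁅s * p * t, q * t * s⁆ = s * ⁅p, q⁆ * s⁻¹ := by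
  have hprod : s * p * t * (q * t * s) = s * (p * q) * s := by
    simp only [mul_assoc]
    rw [htq.left_comm, ← mul_assoc t t, ht, one_mul]
  have hprod' : q * t * s * (s * p * t) = q * p := by
    simp only [mul_assoc]
    rw [← mul_assoc s s, hs, one_mul, htp.left_comm, ht, mul_one]
  calc ⁅s * p * t, q * t * s⁆ = s * (p * q) * s * (q * p)⁻¹ := by
        rw [commutatorElement_def, ← hprod, ← hprod']; group
    _ = s * ⁅p, q⁆ * s⁻¹ := by
        rw [mul_assoc, hsqp.inv_right.eq, inv_eq_of_mul_eq_one_right hs, commutatorElement_def]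
        group

namespace Equiv.Perm

variable {α : Type*}

theorem SameCycle.of_forall_sameCycle_apply {f g : Perm α} (h : ∀ z, f.SameCycle z (g z))
    {a b : α} (hab : g.SameCycle a b) : f.SameCycle a b := by
  obtain ⟨i, rfl⟩ := hab
  induction i using Int.induction_on generalizing a with
  | zero => exact SameCycle.refl f a
  | succ i ih =>
    rw [zpow_add_one, mul_apply]
    exact (h a).trans (ih (a := g a))
  | pred i ih =>
    rw [zpow_sub_one, mul_apply]
    refine SameCycle.trans ?_ (ih (a := g⁻¹ a))
    simpa using (h (g⁻¹ a)).symm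

theorem apply_inv_apply_ne_inv_apply {g : Perm α} {x : α} (hx : g x ≠ x) :
    g (g⁻¹ x) ≠ g⁻¹ x := by
  simpa [eq_symm_apply] using hx

variable [DecidableEq α]

theorem commute_swap_of_apply_eq {f : Perm α} {x y : α} (hx : f x = x) (hy : f y = y) :
    Commute (swap x y) f := by
  show swap x y * f = f * swap x y
  simpa [hx, hy] using (mul_swap_eq_swap_mul f x y).symm

theorem IsCycle.mul_swap_of_apply_eq {g : Perm α} (hg : g.IsCycle) {x y : α} (hx : g x ≠ x)
    (hy : g y = y) : (g * swap x y).IsCycle := by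
  have hxy : x ≠ y := by rintro rfl; exact hx hy
  -- `g * swap x y` agrees with `g` off `x`, and sends `x ↦ y ↦ g x`.
  have hstep : ∀ z, (g * swap x y).SameCycle z (g z) := by
    intro z
    by_cases hzx : z = x
    · subst hzx
      exact ⟨2, by simp [pow_two, mul_apply, hy]⟩
    by_cases hzy : z = y
    · subst hzy; rw [hy]
    · exact ⟨1, by simp [mul_apply, swap_apply_of_ne_of_ne hzx hzy]⟩
  refine ⟨x, by simpa [mul_apply, hy] using hxy.symm, fun z hz => ?_⟩
  by_cases hzx : z = x
  · rw [hzx]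
  by_cases hzy : z = y
  · exact ⟨1, by simp [mul_apply, hy, hzy]⟩
  have hgz : g z ≠ z := by rwa [mul_apply, swap_apply_of_ne_of_ne hzx hzy] at hz
  exact SameCycle.of_forall_sameCycle_apply hstep (hg.sameCycle hx hgz)

theorem support_mul_swap_of_apply_eq [Fintype α] {g : Perm α} {x y : α} (hx : g x ≠ x)
    (hy : g y = y) : (g * swap x y).support = insert y g.support := by
  ext z
  rw [Finset.mem_insert, mem_support, mem_support, mul_apply]
  by_cases hzx : z = x
  · subst hzx
    have hxy : z ≠ y := by rintro rfl; exact hx hy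
    simp [hy, hx, hxy.symm]
  by_cases hzy : z = y
  · subst hzy
    simpa [hzx] using fun h => hzx (g.injective (h.trans hy.symm)).symm
  · simp [swap_apply_of_ne_of_ne hzx hzy, hzy]

theorem swap_mul_eq_mul_swap_of_apply_eq {g : Perm α} {x y : α} (hy : g y = y) :
    swap x y * g = g * swap (g⁻¹ x) y := by
  rw [swap_mul_eq_mul_swap, inv_eq_iff_eq.2 hy.symm]

theorem IsCycle.swap_mul_of_apply_eq {g : Perm α} (hg : g.IsCycle) {x y : α} (hx : g x ≠ x)
    (hy : g y = y) : (swap x y * g).IsCycle := by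
  rw [swap_mul_eq_mul_swap_of_apply_eq hy]
  exact hg.mul_swap_of_apply_eq (apply_inv_apply_ne_inv_apply hx) hy

theorem support_swap_mul_of_apply_eq [Fintype α] {g : Perm α} {x y : α} (hx : g x ≠ x)
    (hy : g y = y) : (swap x y * g).support = insert y g.support := by
  rw [swap_mul_eq_mul_swap_of_apply_eq hy,
    support_mul_swap_of_apply_eq (apply_inv_apply_ne_inv_apply hx) hy]

theorem swap_mul_swap_eq_swap_mul_swap {a b c : α} (hab : a ≠ b) (hac : a ≠ c) :
    swap b c * swap a b = swap a c * swap c b := by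
  calc swap b c * swap a b = swap b c * swap a b * swap b c * swap b c := by
        rw [mul_assoc _ (swap b c), swap_mul_self, mul_one]
    _ = swap a c * swap c b := by
        rw [swap_mul_swap_mul_swap hab hac, swap_comm c a, swap_comm b c]

variable [Fintype α] {g : Perm α} {a b c : α}

theorem IsCycle.swap_mul_mul_swap (hg : g.IsCycle) (ha : g a ≠ a) (hb : g b = b) (hc : g c = c)
    (hbc : b ≠ c) :
    (swap a b * g * swap b c).IsCycle ∧
      (swap a b * g * swap b c).support = insert b (insert c g.support) := by
  have hab : a ≠ b := by rintro rfl; exact ha hb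
  have hac : a ≠ c := by rintro rfl; exact ha hc
  have hb' : (swap a b * g) b ≠ b := by simpa [mul_apply, hb] using hab
  have hc' : (swap a b * g) c = c := by
    simp [mul_apply, hc, swap_apply_of_ne_of_ne hac.symm hbc.symm]
  refine ⟨(hg.swap_mul_of_apply_eq ha hb).mul_swap_of_apply_eq hb' hc', ?_⟩
  rw [support_mul_swap_of_apply_eq hb' hc', support_swap_mul_of_apply_eq ha hb, Finset.insert_comm]

theorem IsCycle.mul_swap_mul_swap (hg : g.IsCycle) (ha : g a ≠ a) (hb : g b = b) (hc : g c = c)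
    (hbc : b ≠ c) :
    (g * swap b c * swap a b).IsCycle ∧
      (g * swap b c * swap a b).support = insert b (insert c g.support) := by
  have hab : a ≠ b := by rintro rfl; exact ha hb
  have hac : a ≠ c := by rintro rfl; exact ha hc
  have hc' : (g * swap a c) c ≠ c := by
    simpa [mul_apply] using fun h => hac (g.injective (h.trans hc.symm))
  have hb' : (g * swap a c) b = b := by
    simp [mul_apply, swap_apply_of_ne_of_ne hab.symm hbc, hb]
  rw [mul_assoc, swap_mul_swap_eq_swap_mul_swap hab hac, ← mul_assoc]
  refine ⟨(hg.mul_swap_of_apply_eq ha hc).mul_swap_of_apply_eq hc' hb', ?_⟩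
  rw [support_mul_swap_of_apply_eq hc' hb', support_mul_swap_of_apply_eq ha hc]

end Equiv.Perm

theorem stmt_19_general {α : Type*} [Fintype α] [DecidableEq α]
    (h₁ v₁ : Equiv.Perm α) (A : Finset α) (a₁ a₂ b₁ b₂ : α)
    (hh₁ : h₁.IsCycle) (hh₁s : h₁.support = A)
    (hv₁ : v₁.IsCycle) (hv₁s : v₁.support = A)
    (ha₁ : a₁ ∈ A) (ha12 : h₁ a₁ = a₂) (hv₁n : v₁⁻¹ a₁ = a₂)
    (hb₁ : b₁ ∉ A) (hb₂ : b₂ ∉ A) (hbne : b₁ ≠ b₂) :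
    ∀ h v : Equiv.Perm α,
      h = Equiv.swap a₁ b₁ * h₁ * Equiv.swap b₁ b₂ →
      v = v₁ * Equiv.swap b₁ b₂ * Equiv.swap a₁ b₁ →
      h.IsCycle ∧ h.support = A ∪ {b₁, b₂} ∧
      v.IsCycle ∧ v.support = A ∪ {b₁, b₂} ∧
      (h * v * h⁻¹ * v⁻¹).cycleType = (h₁ * v₁ * h₁⁻¹ * v₁⁻¹).cycleType ∧
      (h * v * h⁻¹ * v⁻¹) b₂ = b₂ := by
  rintro h v rfl rfl
  have hab₂ : a₁ ≠ b₂ := by rintro rfl; exact hb₂ ha₁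
  have hh₁b₁ : h₁ b₁ = b₁ := notMem_support.1 (hh₁s ▸ hb₁)
  have hh₁b₂ : h₁ b₂ = b₂ := notMem_support.1 (hh₁s ▸ hb₂)
  have hv₁b₁ : v₁ b₁ = b₁ := notMem_support.1 (hv₁s ▸ hb₁)
  have hv₁b₂ : v₁ b₂ = b₂ := notMem_support.1 (hv₁s ▸ hb₂)
  obtain ⟨hcyc, hsupp⟩ :=
    hh₁.swap_mul_mul_swap (mem_support.1 (hh₁s ▸ ha₁)) hh₁b₁ hh₁b₂ hbne
  obtain ⟨vcyc, vsupp⟩ :=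
    hv₁.mul_swap_mul_swap (mem_support.1 (hv₁s ▸ ha₁)) hv₁b₁ hv₁b₂ hbne
  have hcomm : ⁅swap a₁ b₁ * h₁ * swap b₁ b₂, v₁ * swap b₁ b₂ * swap a₁ b₁⁆ =
      swap a₁ b₁ * ⁅h₁, v₁⁆ * (swap a₁ b₁)⁻¹ :=
    commutatorElement_concat_eq_conj (swap_mul_self _ _) (swap_mul_self _ _)
      (commute_swap_of_apply_eq hh₁b₁ hh₁b₂) (commute_swap_of_apply_eq hv₁b₁ hv₁b₂)
      (commute_swap_of_apply_eq (by simp [mul_apply, ha12, ← hv₁n])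
        (by simp [mul_apply, hh₁b₁, hv₁b₁]))
  refine ⟨hcyc, ?_, vcyc, ?_, by rw [← commutatorElement_def, hcomm, cycleType_conj]; rfl, ?_⟩
  · rw [hsupp, hh₁s, Finset.union_insert, Finset.union_singleton]
  · rw [vsupp, hv₁s, Finset.union_insert, Finset.union_singleton]
  · rw [← commutatorElement_def, hcomm, commutatorElement_def]
    simp only [mul_apply, swap_inv, swap_apply_of_ne_of_ne hab₂.symm hbne.symm,
      inv_eq_iff_eq.2 hh₁b₂.symm, inv_eq_iff_eq.2 hv₁b₂.symm, hh₁b₂, hv₁b₂]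

/-- Concatenating a 1,1-square-tiled surface `(h₁,v₁)` (single cycles with support
`A`, normalized so `h₁ a₁ = a₂` and `v₁⁻¹ a₁ = a₂`) with the square torus
representative `h₂ = v₂ = (b₁, b₂)` (from the two-row representative `0,1 / 1,0`)
via cylinder concatenation `h = (a₁,b₁)h₁h₂`, `v = v₁v₂(a₁,b₁)` yields single
cycles `h, v` on `A ∪ {b₁, b₂}` whose commutator has the same nontrivial cycle
type as `[h₁,v₁]`, together with an additional fixed point `b₂` (a marked point
of order 0). -/
theorem stmt_19 {α : Type*} [Fintype α] [DecidableEq α]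
    (h₁ v₁ : Equiv.Perm α) (A : Finset α) (a₁ a₂ b₁ b₂ : α)
    (hh₁ : h₁.IsCycle) (hh₁s : h₁.support = A)
    (hv₁ : v₁.IsCycle) (hv₁s : v₁.support = A)
    (ha₁ : a₁ ∈ A) (ha12 : h₁ a₁ = a₂) (hane : a₁ ≠ a₂) (hv₁n : v₁⁻¹ a₁ = a₂)
    (hb₁ : b₁ ∉ A) (hb₂ : b₂ ∉ A) (hbne : b₁ ≠ b₂) :
    ∀ h v : Equiv.Perm α,
      h = Equiv.swap a₁ b₁ * h₁ * Equiv.swap b₁ b₂ →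
      v = v₁ * Equiv.swap b₁ b₂ * Equiv.swap a₁ b₁ →
      h.IsCycle ∧ h.support = A ∪ {b₁, b₂} ∧
      v.IsCycle ∧ v.support = A ∪ {b₁, b₂} ∧
      (h * v * h⁻¹ * v⁻¹).cycleType = (h₁ * v₁ * h₁⁻¹ * v₁⁻¹).cycleType ∧
      (h * v * h⁻¹ * v⁻¹) b₂ = b₂ :=
  stmt_19_general h₁ v₁ A a₁ a₂ b₁ b₂ hh₁ hh₁s hv₁ hv₁s ha₁ ha12 hv₁n hb₁ hb₂ hbne
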